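/- Let α ∈ (0,1) and let g : ℝ^d → ℝ^d satisfy a global Lipschitz condition with constant L > 0. For τ ≥ 0 and continuous f : ℝ₊ → ℝ^d define (T_τ f)(θ) = f(τ + θ) + (1/Γ(α)) ∫₀^τ (τ + θ − s)^{α−1} g(x_f(s)) ds, where x_f is the unique continuous global solution of x_f(t) = f(t) + (1/Γ(α)) ∫₀ᵗ (t−s)^{α−1} g(x_f(s)) ds. Then the family {T_τ : τ ≥ 0} satisfies the semigroup property: T_{σ+τ} f = T_σ(T_τ f) for all σ, τ ≥ 0 and all continuous f : ℝ₊ → ℝ^d, and T_0 f = f. -/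

import Mathlib

/-!
Splitting `∫₀^{τ+t}` at `τ` shows that `t ↦ x_f (τ + t)` solves the Volterra equation with forcing
term `T_τ f`, so by uniqueness `x_{T_τ f} = x_f (τ + ·)`. Substituting this into `T_σ (T_τ f)` and
splitting `∫₀^{σ+τ}` at `τ` once more gives `T_{σ+τ} f`. Uniqueness is a Gronwall argument: the
difference `w` of two solutions satisfies `w t ≤ C ∫₀ᵗ (t - s)^{α-1} w s ds`, and since
`∫₀ᵗ (t - s)^{α-1} e^{r s} ds ≤ Γ(α) r^{-α} e^{r t}`, the maximum of `e^{-r t} w t` is at most a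
fraction of itself once `r^α` is large.
-/

open Real MeasureTheory Set

/-- The operator `(T_τ f)(θ) = f(τ+θ) + (1/Γ(α)) ∫₀^τ (τ+θ−s)^{α−1} g(x_f(s)) ds`,
where `sol f = x_f` is the solution operator. -/
noncomputable def semigroupOp {d : ℕ} (α : ℝ)
    (g : EuclideanSpace ℝ (Fin d) → EuclideanSpace ℝ (Fin d))
    (sol : (ℝ → EuclideanSpace ℝ (Fin d)) → ℝ → EuclideanSpace ℝ (Fin d))
    (τ : ℝ) (f : ℝ → EuclideanSpace ℝ (Fin d)) :
    ℝ → EuclideanSpace ℝ (Fin d) :=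
  fun θ => f (τ + θ) + (1 / Real.Gamma α) •
    ∫ s in (0:ℝ)..τ, ((τ + θ - s) ^ (α - 1)) • g (sol f s)

open scoped NNReal

section Volterra

variable {E : Type*} [NormedAddCommGroup E] [NormedSpace ℝ E] {α : ℝ}

lemma intervalIntegrable_rpow_sub_smul (hα : 0 < α) (b : ℝ) {a t : ℝ} {φ : ℝ → E}
    (hφ : ContinuousOn φ (uIcc a t)) :
    IntervalIntegrable (fun s => (b - s) ^ (α - 1) • φ s) volume a t := by
  have h := (intervalIntegral.intervalIntegrable_rpow' (a := b - a) (b := b - t)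
    (by linarith : -1 < α - 1)).comp_sub_left b
  simp only [sub_sub_cancel] at h
  exact h.smul_continuousOn hφ

lemma integral_rpow_sub_mul_exp_le (hα : 0 < α) {r t : ℝ} (hr : 0 < r) (ht : 0 ≤ t) :
    ∫ s in (0:ℝ)..t, (t - s) ^ (α - 1) * exp (r * s) ≤ exp (r * t) * ((1 / r) ^ α * Gamma α) := by
  have hsubst : ∫ s in (0:ℝ)..t, (t - s) ^ (α - 1) * exp (r * s) =
      exp (r * t) * ∫ u in (0:ℝ)..t, u ^ (α - 1) * exp (-(r * u)) := by
    rw [← intervalIntegral.integral_const_mul]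
    have := intervalIntegral.integral_comp_sub_left (a := 0) (b := t)
      (fun u => exp (r * t) * (u ^ (α - 1) * exp (-(r * u)))) t
    simp only [sub_self, sub_zero] at this
    rw [← this]
    refine intervalIntegral.integral_congr fun s _ => ?_
    rw [mul_left_comm, ← exp_add]
    ring_nf
  have hIoi : IntegrableOn (fun u : ℝ => u ^ (α - 1) * exp (-(r * u))) (Ioi 0) := by
    simpa [rpow_one, neg_mul] using
      integrableOn_rpow_mul_exp_neg_mul_rpow (p := 1) (by linarith) zero_lt_one hr
  have hle_Ioi : ∫ u in (0:ℝ)..t, u ^ (α - 1) * exp (-(r * u)) ≤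
      ∫ u in Ioi (0:ℝ), u ^ (α - 1) * exp (-(r * u)) := by
    rw [intervalIntegral.integral_of_le ht]
    refine setIntegral_mono_set hIoi ?_ Ioc_subset_Ioi_self.eventuallyLE
    filter_upwards [ae_restrict_mem measurableSet_Ioi] with u hu
    have := rpow_nonneg (le_of_lt hu) (α - 1)
    positivity
  rw [hsubst, ← integral_rpow_mul_exp_neg_mul_Ioi hα hr]
  exact mul_le_mul_of_nonneg_left hle_Ioi (exp_nonneg _)

lemma integral_rpow_sub_mul_le_of_le_exp (hα : 0 < α) {r t M : ℝ} (hr : 0 < r) (ht : 0 ≤ t)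
    (hM : 0 ≤ M) {w : ℝ → ℝ} (hw : ContinuousOn w (Icc 0 t))
    (hwM : ∀ s ∈ Icc 0 t, w s ≤ M * exp (r * s)) :
    ∫ s in (0:ℝ)..t, (t - s) ^ (α - 1) * w s ≤ M * (exp (r * t) * ((1 / r) ^ α * Gamma α)) := by
  have hw_int : IntervalIntegrable (fun s => (t - s) ^ (α - 1) * w s) volume 0 t :=
    intervalIntegrable_rpow_sub_smul hα t (by rwa [uIcc_of_le ht])
  have hexp_int : IntervalIntegrable (fun s => (t - s) ^ (α - 1) * (M * exp (r * s))) volume 0 t :=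
    intervalIntegrable_rpow_sub_smul hα t (by fun_prop)
  calc ∫ s in (0:ℝ)..t, (t - s) ^ (α - 1) * w s
      ≤ ∫ s in (0:ℝ)..t, (t - s) ^ (α - 1) * (M * exp (r * s)) :=
        intervalIntegral.integral_mono_on ht hw_int hexp_int fun s hs =>
          mul_le_mul_of_nonneg_left (hwM s hs) (rpow_nonneg (by linarith [hs.2]) _)
    _ = M * ∫ s in (0:ℝ)..t, (t - s) ^ (α - 1) * exp (r * s) := by
        rw [← intervalIntegral.integral_const_mul]
        exact intervalIntegral.integral_congr fun s _ => by ring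
    _ ≤ M * (exp (r * t) * ((1 / r) ^ α * Gamma α)) :=
        mul_le_mul_of_nonneg_left (integral_rpow_sub_mul_exp_le hα hr ht) hM

lemma eq_zero_of_le_integral_rpow_sub_mul (hα : 0 < α) {C T : ℝ} (hC : 0 ≤ C) {w : ℝ → ℝ}
    (hw : ContinuousOn w (Icc 0 T)) (hw0 : ∀ t ∈ Icc 0 T, 0 ≤ w t)
    (hle : ∀ t ∈ Icc 0 T, w t ≤ C * ∫ s in (0:ℝ)..t, (t - s) ^ (α - 1) * w s) :
    ∀ t ∈ Icc 0 T, w t = 0 := by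
  intro t ht
  have hΓ : 0 < Gamma α := Gamma_pos_of_pos hα
  -- the weight `exp (-r t)` with `r ^ α = 2 C Γ(α) + 1` makes the integral operator a contraction
  set r : ℝ := (2 * C * Gamma α + 1) ^ α⁻¹
  have hr : 0 < r := rpow_pos_of_pos (by positivity) _
  have hrα : (1 / r) ^ α = 1 / (2 * C * Gamma α + 1) := by
    rw [div_rpow zero_le_one hr.le, one_rpow, ← rpow_mul (by positivity),
      inv_mul_cancel₀ hα.ne', rpow_one]
  set φ : ℝ → ℝ := fun s => exp (-(r * s)) * w s
  obtain ⟨t₀, ht₀, hmax⟩ := isCompact_Icc.exists_isMaxOn ⟨t, ht⟩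
    ((continuous_exp.comp (continuous_const.mul continuous_id).neg).continuousOn.mul hw)
  set M := φ t₀
  have hM0 : 0 ≤ M := mul_nonneg (exp_nonneg _) (hw0 t₀ ht₀)
  have hwM : ∀ s ∈ Icc 0 T, w s ≤ M * exp (r * s) := fun s hs => by
    have : φ s ≤ M := hmax hs
    rw [← mul_le_mul_iff_of_pos_left (exp_pos (-(r * s))), mul_left_comm, ← exp_add,
      neg_add_cancel, exp_zero, mul_one]
    exact this
  have hw_t₀ := (hle t₀ ht₀).trans (mul_le_mul_of_nonneg_left
    (integral_rpow_sub_mul_le_of_le_exp hα hr ht₀.1 hM0 (hw.mono (Icc_subset_Icc_right ht₀.2))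
      fun s hs => hwM s ⟨hs.1, hs.2.trans ht₀.2⟩) hC)
  have hcontr : M ≤ C * Gamma α / (2 * C * Gamma α + 1) * M := calc
    M = exp (-(r * t₀)) * w t₀ := rfl
    _ ≤ exp (-(r * t₀)) * (C * (M * (exp (r * t₀) * ((1 / r) ^ α * Gamma α)))) :=
        mul_le_mul_of_nonneg_left hw_t₀ (exp_nonneg _)
    _ = C * Gamma α / (2 * C * Gamma α + 1) * M := by
        rw [hrα, exp_neg]
        field_simp
  have hM : M = 0 := by
    have hq : C * Gamma α / (2 * C * Gamma α + 1) < 1 := by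
      rw [div_lt_one (by positivity)]
      nlinarith [mul_nonneg hC hΓ.le]
    nlinarith
  exact le_antisymm (by simpa [hM] using hwM t ht) (hw0 t ht)

lemma integral_rpow_sub_smul_add (hα : 0 < α) (b : ℝ) {τ t : ℝ} (hτ : 0 ≤ τ) (ht : 0 ≤ t)
    {ψ : ℝ → E} (hψ : ContinuousOn ψ (Ici 0)) :
    ∫ s in (0:ℝ)..(τ + t), (b - s) ^ (α - 1) • ψ s
      = (∫ s in (0:ℝ)..τ, (b - s) ^ (α - 1) • ψ s)
        + ∫ v in (0:ℝ)..t, (b - (τ + v)) ^ (α - 1) • ψ (τ + v) := by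
  have h₁ : uIcc 0 τ ⊆ Ici 0 := by rw [uIcc_of_le hτ]; exact Icc_subset_Ici_self
  have h₂ : uIcc τ (τ + t) ⊆ Ici 0 := by
    rw [uIcc_of_le (by linarith)]; exact fun s hs => hτ.trans hs.1
  rw [← intervalIntegral.integral_add_adjacent_intervals
    (intervalIntegrable_rpow_sub_smul hα b (hψ.mono h₁))
    (intervalIntegrable_rpow_sub_smul hα b (hψ.mono h₂)),
    intervalIntegral.integral_comp_add_left (fun s => (b - s) ^ (α - 1) • ψ s), add_zero]

lemma continuousOn_integral_rpow_add_sub_smul (hα₀ : 0 < α) (hα₁ : α ≤ 1) {τ : ℝ} (hτ : 0 ≤ τ)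
    {ψ : ℝ → E} (hψ : ContinuousOn ψ (Icc 0 τ)) :
    ContinuousOn (fun θ => ∫ s in (0:ℝ)..τ, (τ + θ - s) ^ (α - 1) • ψ s) (Ici 0) := by
  obtain ⟨C, hC⟩ := isCompact_Icc.exists_bound_of_continuousOn hψ
  rw [← uIcc_of_le hτ] at hψ
  intro θ₀ hθ₀
  refine intervalIntegral.continuousWithinAt_of_dominated_interval
    (bound := fun s => (τ - s) ^ (α - 1) * C) ?_ ?_ ?_ ?_
  · exact Filter.Eventually.of_forall fun θ =>
      (intervalIntegrable_rpow_sub_smul hα₀ (τ + θ) hψ).def'.aestronglyMeasurable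
  · filter_upwards [self_mem_nhdsWithin] with θ (hθ : 0 ≤ θ)
    filter_upwards [Measure.ae_ne volume τ] with s hsτ hs
    rw [uIoc_of_le hτ] at hs
    have hpos : 0 < τ - s := sub_pos.2 (lt_of_le_of_ne hs.2 hsτ)
    -- for `α ≤ 1` the kernel decreases in its argument
    have hk : (τ + θ - s) ^ (α - 1) ≤ (τ - s) ^ (α - 1) :=
      rpow_le_rpow_of_nonpos hpos (by linarith) (by linarith)
    rw [norm_smul, norm_of_nonneg (rpow_nonneg (by linarith) _)]
    exact mul_le_mul hk (hC s ⟨hs.1.le, hs.2⟩) (norm_nonneg _) (rpow_nonneg hpos.le _)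
  · simpa [smul_eq_mul] using intervalIntegrable_rpow_sub_smul (E := ℝ) hα₀ τ
      (φ := fun _ => C) (a := 0) (t := τ) continuousOn_const
  · filter_upwards [Measure.ae_ne volume τ] with s hsτ hs
    rw [uIoc_of_le hτ] at hs
    have hpos : τ + θ₀ - s ≠ 0 := by
      have := lt_of_le_of_ne hs.2 hsτ; rw [mem_Ici] at hθ₀; linarith
    exact ((continuousAt_const.add continuousAt_id).sub continuousAt_const |>.rpow_const
      (Or.inl hpos) |>.smul continuousAt_const).continuousWithinAt

def SolvesVolterra (α : ℝ) (g : E → E) (h x : ℝ → E) : Prop :=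
  ContinuousOn x (Ici 0) ∧
    ∀ t, 0 ≤ t → x t = h t + (1 / Gamma α) • ∫ s in (0:ℝ)..t, (t - s) ^ (α - 1) • g (x s)

lemma SolvesVolterra.norm_sub_le {K : ℝ≥0} {g : E → E} (hg : LipschitzWith K g) (hα : 0 < α)
    {h y z : ℝ → E} (hy : SolvesVolterra α g h y) (hz : SolvesVolterra α g h z) {t : ℝ}
    (ht : 0 ≤ t) :
    ‖y t - z t‖ ≤ K / Gamma α * ∫ s in (0:ℝ)..t, (t - s) ^ (α - 1) * ‖y s - z s‖ := by
  have hΓ : 0 < Gamma α := Gamma_pos_of_pos hα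
  have hsub : uIcc 0 t ⊆ Ici 0 := by rw [uIcc_of_le ht]; exact Icc_subset_Ici_self
  have hgy : IntervalIntegrable (fun s => (t - s) ^ (α - 1) • g (y s)) volume 0 t :=
    intervalIntegrable_rpow_sub_smul hα t (hg.continuous.comp_continuousOn (hy.1.mono hsub))
  have hgz : IntervalIntegrable (fun s => (t - s) ^ (α - 1) • g (z s)) volume 0 t :=
    intervalIntegrable_rpow_sub_smul hα t (hg.continuous.comp_continuousOn (hz.1.mono hsub))
  have hdiff : y t - z t = (1 / Gamma α) •
      ∫ s in (0:ℝ)..t, (t - s) ^ (α - 1) • (g (y s) - g (z s)) := by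
    rw [hy.2 t ht, hz.2 t ht, add_sub_add_left_eq_sub, ← smul_sub,
      ← intervalIntegral.integral_sub hgy hgz]
    simp only [smul_sub]
  have hnorm : ‖∫ s in (0:ℝ)..t, (t - s) ^ (α - 1) • (g (y s) - g (z s))‖ ≤
      ∫ s in (0:ℝ)..t, (t - s) ^ (α - 1) * (K * ‖y s - z s‖) := by
    refine intervalIntegral.norm_integral_le_of_norm_le ht (Filter.Eventually.of_forall
      fun s hs => ?_) (intervalIntegrable_rpow_sub_smul hα t ?_)
    · have hk := rpow_nonneg (sub_nonneg.2 hs.2) (α - 1)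
      rw [norm_smul, norm_of_nonneg hk]
      exact mul_le_mul_of_nonneg_left (hg.norm_sub_le _ _) hk
    · exact continuousOn_const.mul ((hy.1.sub hz.1).norm.mono hsub)
  calc ‖y t - z t‖
      = 1 / Gamma α * ‖∫ s in (0:ℝ)..t, (t - s) ^ (α - 1) • (g (y s) - g (z s))‖ := by
        rw [hdiff, norm_smul, norm_of_nonneg (by positivity)]
    _ ≤ 1 / Gamma α * ∫ s in (0:ℝ)..t, (t - s) ^ (α - 1) * (K * ‖y s - z s‖) :=
        mul_le_mul_of_nonneg_left hnorm (by positivity)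
    _ = K / Gamma α * ∫ s in (0:ℝ)..t, (t - s) ^ (α - 1) * ‖y s - z s‖ := by
        rw [← intervalIntegral.integral_const_mul, ← intervalIntegral.integral_const_mul]
        exact intervalIntegral.integral_congr fun s _ => by ring

lemma SolvesVolterra.eqOn {K : ℝ≥0} {g : E → E} (hg : LipschitzWith K g) (hα : 0 < α)
    {h y z : ℝ → E} (hy : SolvesVolterra α g h y) (hz : SolvesVolterra α g h z) :
    EqOn y z (Ici 0) := by
  intro T (hT : 0 ≤ T)
  have hw := eq_zero_of_le_integral_rpow_sub_mul hα (by positivity : 0 ≤ (K : ℝ) / Gamma α)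
    ((hy.1.sub hz.1).norm.mono Icc_subset_Ici_self) (fun _ _ => norm_nonneg _)
    (fun t ht => hy.norm_sub_le hg hα hz ht.1) T ⟨hT, le_rfl⟩
  exact sub_eq_zero.1 (norm_eq_zero.1 hw)

end Volterra

section Semigroup

variable {d : ℕ} {α : ℝ} {g : EuclideanSpace ℝ (Fin d) → EuclideanSpace ℝ (Fin d)}
  {sol : (ℝ → EuclideanSpace ℝ (Fin d)) → ℝ → EuclideanSpace ℝ (Fin d)}

lemma semigroupOp_zero (f : ℝ → EuclideanSpace ℝ (Fin d)) (θ : ℝ) :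
    semigroupOp α g sol 0 f θ = f θ := by
  simp [semigroupOp]

lemma continuousOn_semigroupOp (hα₀ : 0 < α) (hα₁ : α ≤ 1) {τ : ℝ} (hτ : 0 ≤ τ)
    {f : ℝ → EuclideanSpace ℝ (Fin d)} (hf : ContinuousOn f (Ici 0))
    (hgx : ContinuousOn (fun s => g (sol f s)) (Icc 0 τ)) :
    ContinuousOn (semigroupOp α g sol τ f) (Ici 0) := by
  refine ContinuousOn.add ?_ ((continuousOn_integral_rpow_add_sub_smul hα₀ hα₁ hτ hgx).const_smul
    (1 / Gamma α))
  exact hf.comp (by fun_prop) fun _ hθ => mem_Ici.2 (add_nonneg hτ hθ)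

lemma SolvesVolterra.comp_const_add (hα : 0 < α) (hg : Continuous g) {τ : ℝ} (hτ : 0 ≤ τ)
    {f : ℝ → EuclideanSpace ℝ (Fin d)} (hx : SolvesVolterra α g f (sol f)) :
    SolvesVolterra α g (semigroupOp α g sol τ f) (fun t => sol f (τ + t)) := by
  refine ⟨hx.1.comp (continuous_const.add continuous_id).continuousOn
    fun _ ht => mem_Ici.2 (add_nonneg hτ ht), fun t ht => ?_⟩
  have hgx : ContinuousOn (fun s => g (sol f s)) (Ici 0) := hg.comp_continuousOn hx.1
  dsimp only
  rw [hx.2 _ (by positivity), integral_rpow_sub_smul_add hα _ hτ ht hgx, smul_add, ← add_assoc]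
  simp only [add_sub_add_left_eq_sub]
  rfl

lemma semigroupOp_add (hα₀ : 0 < α) (hα₁ : α ≤ 1) {K : ℝ≥0} (hg : LipschitzWith K g)
    (hsol : ∀ f, ContinuousOn f (Ici 0) → SolvesVolterra α g f (sol f)) {σ τ : ℝ}
    (hσ : 0 ≤ σ) (hτ : 0 ≤ τ) {f : ℝ → EuclideanSpace ℝ (Fin d)} (hf : ContinuousOn f (Ici 0))
    (θ : ℝ) :
    semigroupOp α g sol (σ + τ) f θ = semigroupOp α g sol σ (semigroupOp α g sol τ f) θ := by
  have hx := hsol f hf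
  have hgx : ContinuousOn (fun s => g (sol f s)) (Ici 0) := hg.continuous.comp_continuousOn hx.1
  have hshift : EqOn (fun t => sol f (τ + t)) (sol (semigroupOp α g sol τ f)) (Ici 0) :=
    (hx.comp_const_add hα₀ hg.continuous hτ).eqOn hg hα₀
      (hsol _ (continuousOn_semigroupOp hα₀ hα₁ hτ hf (hgx.mono Icc_subset_Ici_self)))
  simp only [semigroupOp]
  rw [show σ + τ + θ = τ + (σ + θ) by ring, add_comm σ τ,
    integral_rpow_sub_smul_add hα₀ _ hτ hσ hgx, smul_add, add_assoc]
  congr 3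
  refine intervalIntegral.integral_congr fun v hv => ?_
  rw [uIcc_of_le hσ] at hv
  simp only [← hshift hv.1, add_sub_add_left_eq_sub]

end Semigroup

theorem stmt12_general {d : ℕ} (α : ℝ) (hα : α ∈ Set.Ioo (0:ℝ) 1)
    (g : EuclideanSpace ℝ (Fin d) → EuclideanSpace ℝ (Fin d))
    (L : ℝ)
    (hg : ∀ x y : EuclideanSpace ℝ (Fin d), ‖g x - g y‖ ≤ L * ‖x - y‖)
    (sol : (ℝ → EuclideanSpace ℝ (Fin d)) → ℝ → EuclideanSpace ℝ (Fin d))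
    (hsol : ∀ f : ℝ → EuclideanSpace ℝ (Fin d), ContinuousOn f (Set.Ici 0) →
      ContinuousOn (sol f) (Set.Ici 0) ∧
      ∀ t : ℝ, 0 ≤ t →
        sol f t = f t + (1 / Real.Gamma α) •
          ∫ s in (0:ℝ)..t, ((t - s) ^ (α - 1)) • g (sol f s)) :
    (∀ σ τ : ℝ, 0 ≤ σ → 0 ≤ τ →
      ∀ f : ℝ → EuclideanSpace ℝ (Fin d), ContinuousOn f (Set.Ici 0) →
        ∀ θ : ℝ, 0 ≤ θ →
          semigroupOp α g sol (σ + τ) f θ =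
            semigroupOp α g sol σ (semigroupOp α g sol τ f) θ) ∧
    (∀ f : ℝ → EuclideanSpace ℝ (Fin d), ContinuousOn f (Set.Ici 0) →
      ∀ θ : ℝ, 0 ≤ θ → semigroupOp α g sol 0 f θ = f θ) := by
  have hLip : LipschitzWith L.toNNReal g :=
    LipschitzWith.of_dist_le' fun x y => by simpa only [dist_eq_norm] using hg x y
  exact ⟨fun σ τ hσ hτ f hf θ _ => semigroupOp_add hα.1 hα.2.le hLip hsol hσ hτ hf θ,
    fun f _ θ _ => semigroupOp_zero f θ⟩

theorem stmt12 {d : ℕ} (α : ℝ) (hα : α ∈ Set.Ioo (0:ℝ) 1)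
    (g : EuclideanSpace ℝ (Fin d) → EuclideanSpace ℝ (Fin d))
    (L : ℝ) (hL : 0 < L)
    (hg : ∀ x y : EuclideanSpace ℝ (Fin d), ‖g x - g y‖ ≤ L * ‖x - y‖)
    (sol : (ℝ → EuclideanSpace ℝ (Fin d)) → ℝ → EuclideanSpace ℝ (Fin d))
    (hsol : ∀ f : ℝ → EuclideanSpace ℝ (Fin d), ContinuousOn f (Set.Ici 0) →
      ContinuousOn (sol f) (Set.Ici 0) ∧
      ∀ t : ℝ, 0 ≤ t →
        sol f t = f t + (1 / Real.Gamma α) •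
          ∫ s in (0:ℝ)..t, ((t - s) ^ (α - 1)) • g (sol f s)) :
    (∀ σ τ : ℝ, 0 ≤ σ → 0 ≤ τ →
      ∀ f : ℝ → EuclideanSpace ℝ (Fin d), ContinuousOn f (Set.Ici 0) →
        ∀ θ : ℝ, 0 ≤ θ →
          semigroupOp α g sol (σ + τ) f θ =
            semigroupOp α g sol σ (semigroupOp α g sol τ f) θ) ∧
    (∀ f : ℝ → EuclideanSpace ℝ (Fin d), ContinuousOn f (Set.Ici 0) →
      ∀ θ : ℝ, 0 ≤ θ → semigroupOp α g sol 0 f θ = f θ) :=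
  stmt12_general α hα g L hg sol hsol
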